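/- Let A = B^T ∈ M_n(ℤ) be invertible and Λ ⊇ ℤ^n a full rank lattice. Then the conditions (iv) [BΛ* ⊆ Λ* and Λ* \ BΛ* ⊆ ℤ^n \ Bℤ^n] and (i) [Bℤ^n ∩ Λ* ⊆ BΛ* ⊆ Λ*] are equivalent. -/

import Mathlib

open Matrix

def intPts (n : ℕ) : Set (Fin n → ℝ) := {x | ∀ i, ∃ k : ℤ, x i = (k : ℝ)}

def IsFullLattice {n : ℕ} (L : AddSubgroup (Fin n → ℝ)) : Prop :=
  ∃ b : Module.Basis (Fin n) ℝ (Fin n → ℝ), L = AddSubgroup.closure (Set.range b)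

def dualSet {n : ℕ} (S : Set (Fin n → ℝ)) : Set (Fin n → ℝ) :=
  {x | ∀ g ∈ S, ∃ k : ℤ, x ⬝ᵥ g = (k : ℝ)}

/-! Since ℤⁿ ⊆ Λ, the dual Λ* lies in ℤⁿ, and for subsets D ⊆ Z the inclusion
`D \ E ⊆ Z \ F` says exactly `F ∩ D ⊆ E`. With D = Λ*, Z = ℤⁿ, E = BΛ*, F = Bℤⁿ
this turns (iv) into (i) with its conjuncts swapped. -/

theorem diff_subset_diff_iff_inter_subset {α : Type*} {D Z E F : Set α} (hDZ : D ⊆ Z) :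
    D \ E ⊆ Z \ F ↔ F ∩ D ⊆ E := by
  constructor
  · rintro h x ⟨hxF, hxD⟩
    by_contra hxE
    exact (h ⟨hxD, hxE⟩).2 hxF
  · rintro h x ⟨hxD, hxE⟩
    exact ⟨hDZ hxD, fun hxF => hxE (h ⟨hxF, hxD⟩)⟩

theorem dualSet_anti {n : ℕ} {S T : Set (Fin n → ℝ)} (hST : S ⊆ T) : dualSet T ⊆ dualSet S :=
  fun _ hx g hg => hx g (hST hg)

theorem single_one_mem_intPts {n : ℕ} (i : Fin n) : (Pi.single i 1 : Fin n → ℝ) ∈ intPts n := by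
  intro j
  by_cases h : j = i
  · exact ⟨1, by subst h; simp⟩
  · exact ⟨0, by simp [Pi.single_eq_of_ne h]⟩

theorem dualSet_intPts_subset {n : ℕ} : dualSet (intPts n) ⊆ intPts n := by
  intro x hx i
  obtain ⟨k, hk⟩ := hx _ (single_one_mem_intPts i)
  exact ⟨k, by simpa using hk⟩

theorem stmt12_general {n : ℕ} (B : Matrix (Fin n) (Fin n) ℤ)
    (Λ : AddSubgroup (Fin n → ℝ))
    (hZΛ : intPts n ⊆ (Λ : Set (Fin n → ℝ))) :
    -- (iv)
    ((B.map (Int.cast : ℤ → ℝ)).mulVec '' dualSet (Λ : Set (Fin n → ℝ)) ⊆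
        dualSet (Λ : Set (Fin n → ℝ)) ∧
      dualSet (Λ : Set (Fin n → ℝ)) \
          (B.map (Int.cast : ℤ → ℝ)).mulVec '' dualSet (Λ : Set (Fin n → ℝ)) ⊆
        intPts n \ (B.map (Int.cast : ℤ → ℝ)).mulVec '' intPts n) ↔
    -- (i)
    ((B.map (Int.cast : ℤ → ℝ)).mulVec '' intPts n ∩ dualSet (Λ : Set (Fin n → ℝ)) ⊆
        (B.map (Int.cast : ℤ → ℝ)).mulVec '' dualSet (Λ : Set (Fin n → ℝ)) ∧
      (B.map (Int.cast : ℤ → ℝ)).mulVec '' dualSet (Λ : Set (Fin n → ℝ)) ⊆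
        dualSet (Λ : Set (Fin n → ℝ))) := by
  rw [diff_subset_diff_iff_inter_subset ((dualSet_anti hZΛ).trans dualSet_intPts_subset), and_comm]

/-- equivalence of conditions (iv) and (i) of Proposition 3.6. -/
theorem stmt12 {n : ℕ} (B : Matrix (Fin n) (Fin n) ℤ)
    (hB : IsUnit ((B.map (Int.cast : ℤ → ℝ)).det))
    (Λ : AddSubgroup (Fin n → ℝ)) (hΛ : IsFullLattice Λ)
    (hZΛ : intPts n ⊆ (Λ : Set (Fin n → ℝ))) :
    -- (iv)
    ((B.map (Int.cast : ℤ → ℝ)).mulVec '' dualSet (Λ : Set (Fin n → ℝ)) ⊆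
        dualSet (Λ : Set (Fin n → ℝ)) ∧
      dualSet (Λ : Set (Fin n → ℝ)) \
          (B.map (Int.cast : ℤ → ℝ)).mulVec '' dualSet (Λ : Set (Fin n → ℝ)) ⊆
        intPts n \ (B.map (Int.cast : ℤ → ℝ)).mulVec '' intPts n) ↔
    -- (i)
    ((B.map (Int.cast : ℤ → ℝ)).mulVec '' intPts n ∩ dualSet (Λ : Set (Fin n → ℝ)) ⊆
        (B.map (Int.cast : ℤ → ℝ)).mulVec '' dualSet (Λ : Set (Fin n → ℝ)) ∧
      (B.map (Int.cast : ℤ → ℝ)).mulVec '' dualSet (Λ : Set (Fin n → ℝ)) ⊆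
        dualSet (Λ : Set (Fin n → ℝ))) :=
  stmt12_general B Λ hZΛ
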